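/- arXiv:1703.06690 — 3 statements merged into one kernel-verified Lean document; each statement's English description precedes it below -/
import Mathlib

section
/- Let δ > 0 and define f_δ : ℝⁿ → ℝ by f_δ(x) = g_δ(‖x‖), where g_δ(t) = (δ³ + 3δt² - |t|³)/(3δ²) for |t| ≤ δ and g_δ(t) = |t| for |t| ≥ δ. Then f_δ is convex on ℝⁿ. -/
open Set

lemma hasDerivAt_abs_cube (t : ℝ) : HasDerivAt (fun s : ℝ => |s|^3) (3 * |t| * t) t := by
  have h2 : HasDerivAt (fun s : ℝ => (s^2 : ℝ) ^ ((3:ℝ)/2))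
      ((((2:ℕ):ℝ) * t^1) * ((3:ℝ)/2) * (t^2)^((3:ℝ)/2 - 1)) t :=
    (hasDerivAt_pow 2 t).rpow_const (Or.inr (by norm_num))
  have h1 : (fun s : ℝ => |s|^3) = fun s : ℝ => (s^2 : ℝ) ^ ((3:ℝ)/2) := by
    funext s
    rw [← sq_abs, ← Real.rpow_natCast |s| 2, ← Real.rpow_mul (abs_nonneg s)]
    norm_num
  rw [h1]
  convert h2 using 1
  rw [show ((3:ℝ)/2 - 1) = 1/2 by norm_num, ← Real.sqrt_eq_rpow, Real.sqrt_sq_eq_abs]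
  push_cast
  ring


noncomputable def phiAux (δ : ℝ) : ℝ → ℝ := fun t =>
  if |t| ≤ δ then (2*δ*t - |t| * t)/δ^2 else (if 0 < t then 1 else -1)

lemma phiAux_le_one {δ : ℝ} (hδ : 0 < δ) (t : ℝ) (h : |t| ≤ δ) :
    (2*δ*t - |t| * t)/δ^2 ≤ 1 := by
  rw [div_le_one (by positivity), abs_le] at *
  rcases abs_cases t with ⟨e, _⟩ | ⟨e, _⟩ <;> rw [e] <;> nlinarith [h.1, h.2]

lemma neg_one_le_phiAux {δ : ℝ} (hδ : 0 < δ) (t : ℝ) (h : |t| ≤ δ) :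
    (-1 : ℝ) ≤ (2*δ*t - |t| * t)/δ^2 := by
  rw [neg_le, ← neg_div, div_le_one (by positivity)]
  rw [abs_le] at h
  rcases abs_cases t with ⟨e, _⟩ | ⟨e, _⟩ <;> rw [e] <;> nlinarith [h.1, h.2]

lemma phiAux_mono {δ : ℝ} (hδ : 0 < δ) : Monotone (phiAux δ) := by
  intro a b hab
  unfold phiAux
  by_cases h1 : |a| ≤ δ <;> by_cases h2 : |b| ≤ δ
  · simp only [if_pos h1, if_pos h2]
    rw [div_le_div_iff_of_pos_right (by positivity)]
    rw [abs_le] at h1 h2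
    rcases abs_cases a with ⟨ea, _⟩ | ⟨ea, _⟩ <;> rcases abs_cases b with ⟨eb, _⟩ | ⟨eb, _⟩ <;>
      rw [ea, eb] <;> nlinarith [h1.1, h1.2, h2.1, h2.2]
  · simp only [if_pos h1, if_neg h2]
    have hb : 0 < b := by
      by_contra hb
      push_neg at hb
      rw [abs_le] at h1; rw [not_le] at h2
      rcases abs_cases b with ⟨eb, _⟩ | ⟨eb, _⟩ <;> rw [eb] at h2 <;> nlinarith [h1.1]
    rw [if_pos hb]
    exact phiAux_le_one hδ a h1
  · simp only [if_neg h1, if_pos h2]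
    have ha : ¬ 0 < a := by
      rw [not_le] at h1; rw [abs_le] at h2
      intro ha
      rcases abs_cases a with ⟨ea, _⟩ | ⟨ea, _⟩ <;> rw [ea] at h1 <;> nlinarith [h2.2]
    rw [if_neg ha]
    exact neg_one_le_phiAux hδ b h2
  · simp only [if_neg h1, if_neg h2]
    by_cases ha : 0 < a
    · have hb : 0 < b := lt_of_lt_of_le ha hab
      simp [ha, hb]
    · by_cases hb : 0 < b <;> simp [ha, hb] <;> norm_num


section
variable {δ : ℝ} (hδ : 0 < δ) {g : ℝ → ℝ}
  (hg : ∀ t : ℝ, g t = if |t| ≤ δ then (δ^3 + 3*δ*t^2 - |t|^3) / (3*δ^2) else |t|)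

include hδ in
omit hg in
lemma hasDerivAt_P (t : ℝ) :
    HasDerivAt (fun s : ℝ => (δ^3 + 3*δ*s^2 - |s|^3) / (3*δ^2)) ((2*δ*t - |t| * t)/δ^2) t := by
  have h : HasDerivAt (fun s : ℝ => δ^3 + 3*δ*s^2 - |s|^3)
      (3*δ*(((2:ℕ):ℝ) * t^1) - 3 * |t| * t) t :=
    (((hasDerivAt_pow 2 t).const_mul (3*δ)).const_add (δ^3)).sub (hasDerivAt_abs_cube t)
  have h2 := h.div_const (3*δ^2)
  refine h2.congr_deriv ?_
  have : δ ≠ 0 := ne_of_gt hδ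
  field_simp
  ring

include hδ hg


lemma g_eq_id_of_ge (s : ℝ) (hs : δ ≤ s) : g s = s := by
  rcases eq_or_lt_of_le hs with h | h
  · rw [hg, ← h, if_pos (le_of_eq (abs_of_pos hδ)), abs_of_pos hδ]
    field_simp
    ring
  · rw [hg, if_neg (by rw [abs_of_pos (lt_trans hδ h)]; exact not_le.mpr h),
      abs_of_pos (lt_trans hδ h)]

lemma g_even (s : ℝ) : g (-s) = g s := by
  rw [hg, hg, abs_neg, show (-s)^2 = s^2 from by ring]

lemma hasDerivAt_g_delta : HasDerivAt g 1 δ := by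
  have h1 : HasDerivWithinAt g 1 (Iic δ) δ := by
    have hP : HasDerivWithinAt (fun s : ℝ => (δ^3 + 3*δ*s^2 - |s|^3) / (3*δ^2)) 1 (Iic δ) δ := by
      have := (hasDerivAt_P hδ δ).hasDerivWithinAt (s := Iic δ)
      refine this.congr_deriv ?_
      rw [abs_of_pos hδ]
      field_simp
      ring
    apply hP.congr_of_eventuallyEq ?_
      (by rw [g_eq_id_of_ge hδ hg δ le_rfl, abs_of_pos hδ]; field_simp; ring)
    filter_upwards [self_mem_nhdsWithin, (eventually_gt_nhds hδ).filter_mono nhdsWithin_le_nhds]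
      with s hs1 hs2
    rw [hg, if_pos (by rw [abs_of_pos hs2]; exact hs1)]
  have h2 : HasDerivWithinAt g 1 (Ici δ) δ := by
    apply (hasDerivAt_id δ).hasDerivWithinAt.congr_of_mem ?_ (mem_Ici.mpr le_rfl)
    intro s hs
    exact g_eq_id_of_ge hδ hg s hs
  have := h1.union h2
  rw [Iic_union_Ici] at this
  exact this.hasDerivAt (by simp)

lemma hasDerivAt_g (t : ℝ) : HasDerivAt g (phiAux δ t) t := by
  rcases lt_trichotomy |t| δ with h | h | h
  · -- interior of middle region
    have hP := hasDerivAt_P hδ t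
    have hev : g =ᶠ[nhds t] (fun s : ℝ => (δ^3 + 3*δ*s^2 - |s|^3) / (3*δ^2)) := by
      have : ∀ᶠ s in nhds t, |s| < δ :=
        (continuous_abs.continuousAt (x := t)).eventually_lt continuousAt_const h
      filter_upwards [this] with s hs
      rw [hg, if_pos (le_of_lt hs)]
    have := hP.congr_of_eventuallyEq hev
    rw [phiAux, if_pos (le_of_lt h)]
    exact this
  · -- |t| = δ
    rcases abs_eq (le_of_lt hδ) |>.mp h with rfl | rfl
    · have := hasDerivAt_g_delta hδ hg
      rw [phiAux, if_pos (le_of_eq h), abs_of_pos hδ]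
      convert this using 1
      field_simp
      ring
    · have hd := hasDerivAt_g_delta hδ hg
      have hd' : HasDerivAt g 1 (-(-δ)) := by rwa [neg_neg]
      have hneg : HasDerivAt (fun s : ℝ => g (-s)) (1 * (-1)) (-δ) :=
        hd'.comp (-δ) ((hasDerivAt_id (-δ)).neg)
      have heq : (fun s : ℝ => g (-s)) = g := funext fun s => g_even hδ hg s
      rw [heq] at hneg
      rw [phiAux, if_pos (le_of_eq h), abs_neg, abs_of_pos hδ]
      convert hneg using 1
      field_simp
      ring
  · -- outside
    rw [phiAux, if_neg (not_le.mpr h)]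
    rcases lt_abs.mp h with ht | ht
    · rw [if_pos (lt_trans hδ ht)]
      apply (hasDerivAt_id t).congr_of_eventuallyEq
      filter_upwards [eventually_gt_nhds ht] with s hs
      exact g_eq_id_of_ge hδ hg s hs.le
    · rw [if_neg (by intro h0; linarith : ¬ 0 < t)]
      have : HasDerivAt (fun s : ℝ => -s) (-1) t := (hasDerivAt_id t).neg
      apply this.congr_of_eventuallyEq
      filter_upwards [eventually_lt_nhds (show t < -δ by linarith)] with s hs
      rw [← g_even hδ hg s, g_eq_id_of_ge hδ hg (-s) (by linarith)]
include hδ hg in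
lemma g_convexOn : ConvexOn ℝ Set.univ g := by
  have hdiff : Differentiable ℝ g := fun t => (hasDerivAt_g hδ hg t).differentiableAt
  have hderiv : deriv g = phiAux δ := funext fun t => (hasDerivAt_g hδ hg t).deriv
  exact Monotone.convexOn_univ_of_deriv hdiff (hderiv ▸ phiAux_mono hδ)

include hδ hg in
lemma g_monotoneOn : MonotoneOn g (Ici (0:ℝ)) := by
  have hdiff : Differentiable ℝ g := fun t => (hasDerivAt_g hδ hg t).differentiableAt
  apply monotoneOn_of_deriv_nonneg (convex_Ici 0) hdiff.continuous.continuousOn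
    hdiff.differentiableOn
  intro x hx
  rw [interior_Ici, mem_Ioi] at hx
  rw [(hasDerivAt_g hδ hg x).deriv, phiAux]
  by_cases h : |x| ≤ δ
  · rw [if_pos h, abs_of_pos hx]
    have : x ≤ δ := (le_abs_self x).trans h
    have hnum : 0 ≤ 2*δ*x - x*x := by nlinarith
    positivity
  · rw [if_neg h, if_pos hx]
    norm_num

end

theorem stmt_4 (n : ℕ) (δ : ℝ) (hδ : 0 < δ)
    (g : ℝ → ℝ)
    (hg : ∀ t : ℝ, g t = if |t| ≤ δ then (δ^3 + 3*δ*t^2 - |t|^3) / (3*δ^2) else |t|)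
    (f : EuclideanSpace ℝ (Fin n) → ℝ)
    (hf : ∀ x, f x = g ‖x‖) :
    ConvexOn ℝ Set.univ f := by
  have hconv := g_convexOn hδ hg
  have hmono := g_monotoneOn hδ hg
  refine ⟨convex_univ, fun x _ y _ a b ha hb hab => ?_⟩
  rw [hf, hf, hf]
  have h1 : ‖a • x + b • y‖ ≤ a * ‖x‖ + b * ‖y‖ := by
    calc ‖a • x + b • y‖ ≤ ‖a • x‖ + ‖b • y‖ := norm_add_le _ _
    _ = a * ‖x‖ + b * ‖y‖ := by
        rw [norm_smul, norm_smul, Real.norm_eq_abs, Real.norm_eq_abs,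
          abs_of_nonneg ha, abs_of_nonneg hb]
  have h2 : g ‖a • x + b • y‖ ≤ g (a * ‖x‖ + b * ‖y‖) := by
    apply hmono (mem_Ici.mpr (norm_nonneg _))
      (mem_Ici.mpr (by positivity)) h1
  refine h2.trans ?_
  have := hconv.2 (mem_univ ‖x‖) (mem_univ ‖y‖) ha hb hab
  simpa using this
end

section
/- Let g : ℝⁿ → ℝ be convex and let x₀ ∈ ℝⁿ, α ∈ ℝ with g(x₀) < α. Suppose f : ℝⁿ → ℝ is continuous, Ω_α = {x : f(x) = α} ⊆ {x : g(x) = f(x)}, and f(x₀) = g(x₀) < α. Then {x : g(x) ≤ g(x₀)} ⊆ {x : f(x) ≤ α}. -/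
theorem stmt_14 (n : ℕ) (f g : EuclideanSpace ℝ (Fin n) → ℝ)
    (hf : Continuous f) (hg : ConvexOn ℝ Set.univ g)
    (x₀ : EuclideanSpace ℝ (Fin n)) (α : ℝ)
    (h₀ : f x₀ = g x₀) (hlt : g x₀ < α)
    (hagree : ∀ y, f y = α → g y = f y) :
    {x | g x ≤ g x₀} ⊆ {x | f x ≤ α} := by
  intro x hx
  simp only [Set.mem_setOf_eq] at hx ⊢
  by_contra h
  push_neg at h
  -- path from x₀ to x
  set γ : ℝ → EuclideanSpace ℝ (Fin n) := fun t => (1 - t) • x₀ + t • x with hγ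
  have hcont : ContinuousOn (fun t => f (γ t)) (Set.Icc (0:ℝ) 1) := by
    exact (hf.comp (by continuity)).continuousOn
  have h0 : f (γ 0) = f x₀ := by simp [hγ]
  have h1 : f (γ 1) = f x := by simp [hγ]
  have hmem : α ∈ Set.Icc (f (γ 0)) (f (γ 1)) := by
    rw [h0, h1]
    exact ⟨le_of_lt (h₀ ▸ hlt), le_of_lt h⟩
  obtain ⟨t, ht, hft⟩ := intermediate_value_Icc (by norm_num : (0:ℝ) ≤ 1) hcont hmem
  simp only [] at hft
  have hgy : g (γ t) = α := by rw [hagree _ hft, hft]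
  have hconv : g (γ t) ≤ max (g x₀) (g x) := by
    have := hg.2 (Set.mem_univ x₀) (Set.mem_univ x) (by linarith [ht.2] : (0:ℝ) ≤ 1 - t)
      ht.1 (by ring)
    calc g (γ t) ≤ (1 - t) * g x₀ + t * g x := this
      _ ≤ (1 - t) * max (g x₀) (g x) + t * max (g x₀) (g x) := by
          gcongr
          · linarith [ht.2]
          · exact le_max_left _ _
          · exact ht.1
          · exact le_max_right _ _
      _ = max (g x₀) (g x) := by ring
  have : max (g x₀) (g x) = g x₀ := max_eq_left hx
  rw [hgy, this] at hconv
  linarith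
end

section
/- For the function f(u,v) = u² + |v| and the sequence x_k = (2^{−k}, (2/5)(−1)^k 2^{−2k}), the exact line search property ∇f(x_{k+1})ᵀ s_k = 0 holds for all k, where s_k = x_{k+1} − x_k. -/
open RealInnerProductSpace

lemma aux_grad (f : EuclideanSpace ℝ (Fin 2) → ℝ)
    (hf : ∀ p : EuclideanSpace ℝ (Fin 2), f p = (p 0)^2 + |p 1|)
    (c : ℝ) (hc : c = 1 ∨ c = -1) (a : EuclideanSpace ℝ (Fin 2)) (ha : 0 < c * a 1) :
    HasGradientAt f
      (EuclideanSpace.single 0 (2 * a 0) + EuclideanSpace.single 1 c) a := by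
  have h1 : HasGradientAt (fun p : EuclideanSpace ℝ (Fin 2) => p 0 * p 0 + c * p 1)
      (EuclideanSpace.single 0 (2 * a 0) + EuclideanSpace.single 1 c) a := by
    rw [hasGradientAt_iff_hasFDerivAt]
    have h0 : HasFDerivAt (fun p : EuclideanSpace ℝ (Fin 2) => p 0 * p 0 + c * p 1)
        (((a 0) • (EuclideanSpace.proj 0 : EuclideanSpace ℝ (Fin 2) →L[ℝ] ℝ)
          + (a 0) • (EuclideanSpace.proj 0 : EuclideanSpace ℝ (Fin 2) →L[ℝ] ℝ))
          + c • (EuclideanSpace.proj 1 : EuclideanSpace ℝ (Fin 2) →L[ℝ] ℝ)) a :=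
      (((EuclideanSpace.proj 0 : EuclideanSpace ℝ (Fin 2) →L[ℝ] ℝ).hasFDerivAt (x := a)).mul
        ((EuclideanSpace.proj 0 : EuclideanSpace ℝ (Fin 2) →L[ℝ] ℝ).hasFDerivAt (x := a))).add
        (((EuclideanSpace.proj 1 : EuclideanSpace ℝ (Fin 2) →L[ℝ] ℝ).hasFDerivAt (x := a)).const_mul c)
    refine h0.congr_fderiv ?_
    ext p
    simp [InnerProductSpace.toDual_apply_apply, PiLp.inner_apply, Fin.sum_univ_two,
      EuclideanSpace.single_apply]
    try ring
  apply h1.congr_of_eventuallyEq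
  have hopen : IsOpen {p : EuclideanSpace ℝ (Fin 2) | 0 < c * p 1} :=
    isOpen_lt continuous_const
      (continuous_const.mul (EuclideanSpace.proj (𝕜 := ℝ) (1 : Fin 2)).continuous)
  filter_upwards [hopen.mem_nhds ha] with p hp
  have : |p 1| = c * p 1 := by
    rcases hc with h | h <;> subst h
    · simp only [one_mul] at hp ⊢; exact abs_of_pos hp
    · have : p 1 < 0 := by nlinarith [hp]
      rw [abs_of_neg this]; ring
  rw [hf, this]; ring

theorem stmt_18 (f : EuclideanSpace ℝ (Fin 2) → ℝ)
    (hf : ∀ p : EuclideanSpace ℝ (Fin 2), f p = (p 0)^2 + |p 1|)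
    (x : ℕ → EuclideanSpace ℝ (Fin 2))
    (hx0 : ∀ k : ℕ, x k 0 = (2:ℝ)⁻¹^k)
    (hx1 : ∀ k : ℕ, x k 1 = (2/5) * (-1)^k * (2:ℝ)⁻¹^(2*k)) :
    ∀ k : ℕ, ⟪gradient f (x (k+1)), x (k+1) - x k⟫ = 0 := by
  intro k
  set c : ℝ := (-1)^(k+1) with hcdef
  have hc : c = 1 ∨ c = -1 := by
    rcases Nat.even_or_odd (k+1) with h | h
    · left; exact h.neg_one_pow
    · right; exact h.neg_one_pow
  have hcc : c * c = 1 := by rcases hc with h | h <;> rw [h] <;> norm_num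
  have ha : 0 < c * x (k+1) 1 := by
    rw [hx1]
    have : c * ((2:ℝ)/5 * (-1)^(k+1) * (2:ℝ)⁻¹^(2*(k+1)))
        = (2/5) * (2:ℝ)⁻¹^(2*(k+1)) := by
      rw [← hcdef]; linear_combination (2/5 * (2:ℝ)⁻¹^(2*(k+1))) * hcc
    rw [this]; positivity
  have hg := (aux_grad f hf c hc (x (k+1)) ha).gradient
  rw [hg]
  have hsub0 : (x (k+1) - x k) 0 = x (k+1) 0 - x k 0 := rfl
  have hsub1 : (x (k+1) - x k) 1 = x (k+1) 1 - x k 1 := rfl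
  rw [PiLp.inner_apply, Fin.sum_univ_two]
  simp only [PiLp.add_apply, EuclideanSpace.single_apply, RCLike.inner_apply, conj_trivial,
    hsub0, hsub1]
  norm_num
  rw [hx0, hx0, hx1, hx1, hcdef]
  have e1 : ((-1:ℝ))^(k+1) = (-1)^k * (-1) := pow_succ _ _
  have e2 : ((2:ℝ)⁻¹)^(k+1) = (2⁻¹)^k * 2⁻¹ := pow_succ _ _
  have e3 : ((2:ℝ)⁻¹)^(2*(k+1)) = ((2⁻¹)^k)^2 * (2⁻¹)^2 := by
    rw [← pow_mul]; ring
  have e4 : ((2:ℝ)⁻¹)^(2*k) = ((2⁻¹)^k)^2 := by rw [← pow_mul]; ring_nf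
  have he : ((-1:ℝ))^k * (-1)^k = 1 := by
    rw [← pow_add]; exact Even.neg_one_pow ⟨k, by ring⟩
  rw [e1, e2, e3, e4]
  nlinarith [he]
end
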